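/- arXiv:1112.3001 — 2 statements merged into one kernel-verified Lean document; each statement's English description precedes it below -/
import Mathlib

section
/- Let H be a complex separable Hilbert space, A a bounded self-adjoint operator on H, and λ0 ∈ ℝ. Let γ be a bounded analytic function on the upper half-plane ℂ₊, not identically zero, whose a.e. vertical boundary values γ₀(t) = lim_{ε↓0} γ(t+iε) are non-real for Lebesgue-a.e. t ∈ (−∞, λ0). Suppose γ weakly annihilates A in the sense that for all u, v ∈ H, ⟨g_ε(A)u, v⟩ → 0 as ε ↓ 0, where g_ε(t) = γ(t+iε) − conj(γ(t+iε)) and g_ε(A) is given by the continuous functional calculus. Then the spectrum of A to the left of λ0 is purely singular, i.e. for every u ∈ H the restriction of the scalar spectral measure μ_u to (−∞, λ0) is mutually singular with Lebesgue measure. -/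
/-!
Testing the weak annihilation against `v = f(A) u` gives `∫ f(t) Im γ(t + iε) dμ_u(t) → 0` for
every continuous real `f`. Write `μ_u = μ_s + w dt` (Lebesgue decomposition). By dominated
convergence the absolutely continuous part contributes `∫ f Im γ₀ w dt` in the limit, while the
singular part stays bounded by `C ∫ |f| dμ_s`, `C` a bound for `γ`. Hence
`|∫ f Im γ₀ w dt| ≤ C ∫ |f| dμ_s` for all bounded continuous `f`. As `μ_s` lives on a Lebesgue-null
set, Urysohn functions equal to `1` on most of that set and supported where `∫ |Im γ₀ w|` is small
make the right side negligible, so `Im γ₀ · w = 0` a.e.; since `Im γ₀ ≠ 0` a.e. on `(-∞, λ₀)`,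
`w` vanishes there.
-/

open MeasureTheory Complex Filter Topology Set ComplexConjugate
open scoped ENNReal

noncomputable section

variable {H : Type*} [NormedAddCommGroup H] [InnerProductSpace ℂ H] [CompleteSpace H]

/-- `μ` is the scalar spectral measure of the bounden self-adjoint operator `A` at the
vector `u`: it is finite and `⟨f(A)u, u⟩ = ∫ f dμ` for every continuous `f : ℝ → ℝ`,
`f(A)` being given by the continuous functional calculus. -/
def IsSpectralMeasureAt (A : H →L[ℂ] H) (u : H) (μ : Measure ℝ) : Prop :=
  IsFiniteMeasure μ ∧
    ∀ f : ℝ → ℝ, Continuous f → (inner ℂ (cfc f A u) u : ℂ) = ((∫ t, f t ∂μ : ℝ) : ℂ)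

/-- A function is bounded and analytic on the open upper half-plane. -/
def BddAnalyticUpper {E : Type*} [NormedAddCommGroup E] [NormedSpace ℂ E] (γ : ℂ → E) : Prop :=
  DifferentiableOn ℂ γ {z : ℂ | 0 < z.im} ∧ ∃ C : ℝ, ∀ z : ℂ, 0 < z.im → ‖γ z‖ ≤ C

/-- A function is bounded and analytic on the open lower half-plane. -/
def BddAnalyticLower {E : Type*} [NormedAddCommGroup E] [NormedSpace ℂ E] (γ : ℂ → E) : Prop :=
  DifferentiableOn ℂ γ {z : ℂ | z.im < 0} ∧ ∃ C : ℝ, ∀ z : ℂ, z.im < 0 → ‖γ z‖ ≤ C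

/-- `γ` is an outer function in the upper half-plane, with boundary values `γ₀`:
the vertical boundary values exist a.e. and equal `γ₀`, `log |γ₀(t)|/(1+t²)` is
Lebesgue integrable, and `log |γ|` is the Poisson integral of `log |γ₀|`. -/
def IsOuterUpper (γ : ℂ → ℂ) (γ₀ : ℝ → ℂ) : Prop :=
  (∀ᵐ t : ℝ, Tendsto (fun ε : ℝ => γ ((t : ℂ) + ε * I)) (𝓝[>] 0) (𝓝 (γ₀ t))) ∧
  Integrable (fun t : ℝ => Real.log (‖γ₀ t‖) / (1 + t ^ 2)) ∧
  ∀ x y : ℝ, 0 < y →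
    Real.log (‖γ ((x : ℂ) + y * I)‖) =
      (1 / Real.pi) * ∫ t : ℝ, (y / ((x - t) ^ 2 + y ^ 2)) * Real.log (‖γ₀ t‖)

/-- `δ` is an outer function in the lower half-plane, with boundary values `δ₀`. -/
def IsOuterLower (δ : ℂ → ℂ) (δ₀ : ℝ → ℂ) : Prop :=
  (∀ᵐ t : ℝ, Tendsto (fun ε : ℝ => δ ((t : ℂ) - ε * I)) (𝓝[>] 0) (𝓝 (δ₀ t))) ∧
  Integrable (fun t : ℝ => Real.log (‖δ₀ t‖) / (1 + t ^ 2)) ∧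
  ∀ x y : ℝ, y < 0 →
    Real.log (‖δ ((x : ℂ) + y * I)‖) =
      (1 / Real.pi) * ∫ t : ℝ, (|y| / ((x - t) ^ 2 + y ^ 2)) * Real.log (‖δ₀ t‖)

open scoped BoundedContinuousFunction

theorem IsSpectralMeasureAt.inner_cfc_cfc_eq_integral_mul {A : H →L[ℂ] H} {u : H}
    {μ : Measure ℝ} (hμ : IsSpectralMeasureAt A u μ) {f k : ℝ → ℝ} (hf : Continuous f)
    (hk : Continuous k) :
    inner ℂ (cfc k A u) (cfc f A u) = ((∫ t, f t * k t ∂μ : ℝ) : ℂ) := by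
  rw [← ContinuousLinearMap.adjoint_inner_left, (cfc_predicate f A).adjoint_eq,
    ← hμ.2 (fun t => f t * k t) (hf.mul hk), cfc_mul f k A]
  rfl

theorem cfc_sub_conj_comp_re {A : H →L[ℂ] H} (hA : IsSelfAdjoint A) {g : ℝ → ℂ}
    (hg : Continuous g) :
    cfc (fun z : ℂ => g z.re - conj (g z.re)) A = (2 * I) • cfc (fun t => (g t).im) A := by
  have hsub : (fun z : ℂ => g z.re - conj (g z.re)) = fun z => 2 * I * ((g z.re).im : ℂ) := by
    funext z
    rw [sub_conj]
    push_cast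
    ring
  rw [hsub, cfc_const_mul _ _ A (by fun_prop), cfc_real_eq_complex _ hA]

theorem IsSpectralMeasureAt.tendsto_integral_mul_im_of_tendsto_inner {ι : Type*}
    {l : Filter ι} {A : H →L[ℂ] H} {u : H} {μ : Measure ℝ} (hμ : IsSpectralMeasureAt A u μ)
    (hA : IsSelfAdjoint A) {G : ι → ℝ → ℂ} (hG : ∀ᶠ i in l, Continuous (G i))
    (hann : ∀ v : H, Tendsto (fun i => inner ℂ
      (cfc (fun z : ℂ => G i z.re - conj (G i z.re)) A u) v) l (𝓝 0))
    {f : ℝ → ℝ} (hf : Continuous f) :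
    Tendsto (fun i => ∫ t, f t * (G i t).im ∂μ) l (𝓝 0) := by
  have hinner : ∀ᶠ i in l, inner ℂ (cfc (fun z : ℂ => G i z.re - conj (G i z.re)) A u)
      (cfc f A u) = -2 * I * ((∫ t, f t * (G i t).im ∂μ : ℝ) : ℂ) := by
    filter_upwards [hG] with i hGi
    rw [cfc_sub_conj_comp_re hA hGi, smul_apply, inner_smul_left,
      hμ.inner_cfc_cfc_eq_integral_mul hf (k := fun t => (G i t).im) (continuous_im.comp hGi)]
    simp [map_ofNat]
  have hlim := ((hann (cfc f A u)).congr' hinner).const_mul (-2 * I)⁻¹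
  simp only [← mul_assoc, inv_mul_cancel₀ (by simp : (-2 * I : ℂ) ≠ 0), one_mul, mul_zero] at hlim
  simpa [Function.comp_def] using (continuous_re.tendsto 0).comp hlim

section UpperHalfPlane

variable {E : Type*} [NormedAddCommGroup E] {γ : ℂ → E}

theorem ContinuousOn.continuous_comp_ofReal_add_mul_I (hγ : ContinuousOn γ {z : ℂ | 0 < z.im})
    {ε : ℝ} (hε : 0 < ε) : Continuous fun t : ℝ => γ (t + ε * I) :=
  hγ.comp_continuous (by fun_prop) fun t => by simpa using hε

theorem ContinuousOn.aestronglyMeasurable_of_tendsto_ofReal_add_mul_I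
    (hγ : ContinuousOn γ {z : ℂ | 0 < z.im}) {γ₀ : ℝ → E}
    (hconv : ∀ᵐ t : ℝ, Tendsto (fun ε : ℝ => γ (t + ε * I)) (𝓝[>] 0) (𝓝 (γ₀ t))) :
    AEStronglyMeasurable γ₀ volume := by
  have hseq : Tendsto (fun n : ℕ => 1 / ((n : ℝ) + 1)) atTop (𝓝[>] 0) :=
    tendsto_nhdsWithin_iff.2 ⟨tendsto_one_div_add_atTop_nhds_zero_nat,
      Eventually.of_forall fun n => by simp only [mem_Ioi]; positivity⟩
  exact aestronglyMeasurable_of_tendsto_ae atTop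
    (fun n => (hγ.continuous_comp_ofReal_add_mul_I (by positivity)).aestronglyMeasurable)
    (hconv.mono fun t ht => ht.comp hseq)

theorem ae_norm_le_of_tendsto_ofReal_add_mul_I {C : ℝ} (hC : ∀ z : ℂ, 0 < z.im → ‖γ z‖ ≤ C)
    {γ₀ : ℝ → E} (hconv : ∀ᵐ t : ℝ, Tendsto (fun ε : ℝ => γ (t + ε * I)) (𝓝[>] 0) (𝓝 (γ₀ t))) :
    ∀ᵐ t : ℝ, ‖γ₀ t‖ ≤ C :=
  hconv.mono fun t ht => le_of_tendsto ht.norm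
    (eventually_mem_nhdsWithin.mono fun ε hε => hC _ (by simpa using hε))

end UpperHalfPlane

theorem abs_integral_mul_rnDeriv_le_of_tendsto {X ι : Type*} [MeasurableSpace X]
    {μ ν : Measure X} [SigmaFinite μ] [μ.HaveLebesgueDecomposition ν] {l : Filter ι} [l.NeBot]
    [l.IsCountablyGenerated] {q : ι → X → ℝ} {q₀ b : X → ℝ}
    (hq : ∀ᶠ i in l, AEStronglyMeasurable (q i) μ) (hb : Integrable b μ)
    (hqb : ∀ᶠ i in l, ∀ x, |q i x| ≤ b x)
    (hlim : ∀ᵐ x ∂ν, Tendsto (fun i => q i x) l (𝓝 (q₀ x)))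
    (hzero : Tendsto (fun i => ∫ x, q i x ∂μ) l (𝓝 0)) :
    |∫ x, q₀ x * (μ.rnDeriv ν x).toReal ∂ν| ≤ ∫ x, b x ∂μ.singularPart ν := by
  set μac := ν.withDensity (μ.rnDeriv ν)
  have hdecomp : μ.singularPart ν + μac = μ := μ.singularPart_add_rnDeriv ν
  have hs_le : μ.singularPart ν ≤ μ := (Measure.le_add_right le_rfl).trans_eq hdecomp
  have hac_le : μac ≤ μ := (Measure.le_add_left le_rfl).trans_eq hdecomp
  have hqint : ∀ᶠ i in l, Integrable (q i) μ := by
    filter_upwards [hq, hqb] with i hqi hqbi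
    exact hb.mono' hqi (Eventually.of_forall hqbi)
  have hac : Tendsto (fun i => ∫ x, q i x ∂μac) l (𝓝 (∫ x, q₀ x ∂μac)) :=
    tendsto_integral_filter_of_dominated_convergence b
      (hq.mono fun i hqi => hqi.mono_measure hac_le)
      (hqb.mono fun i hqbi => Eventually.of_forall hqbi)
      (hb.mono_measure hac_le) ((withDensity_absolutelyContinuous _ _).ae_le hlim)
  have hsing : Tendsto (fun i => ∫ x, q i x ∂μ.singularPart ν) l (𝓝 (-∫ x, q₀ x ∂μac)) := by
    refine ((hzero.sub hac).congr' ?_).trans (by rw [zero_sub])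
    filter_upwards [hqint] with i hqi
    rw [sub_eq_iff_eq_add, ← integral_add_measure (hqi.mono_measure hs_le)
      (hqi.mono_measure hac_le), hdecomp]
  have hbound : ∀ᶠ i in l, |∫ x, q i x ∂μ.singularPart ν| ≤ ∫ x, b x ∂μ.singularPart ν := by
    filter_upwards [hqb] with i hqbi
    exact (abs_integral_le_integral_abs).trans
      (integral_mono_of_nonneg (Eventually.of_forall fun x => abs_nonneg _)
        (hb.mono_measure hs_le) (Eventually.of_forall hqbi))
  have hlimit := le_of_tendsto (continuous_abs.tendsto _ |>.comp hsing) hbound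
  rw [abs_neg, integral_withDensity_eq_integral_toReal_smul (Measure.measurable_rnDeriv μ ν)
    (Measure.rnDeriv_lt_top μ ν)] at hlimit
  simpa only [smul_eq_mul, mul_comm] using hlimit

theorem MeasureTheory.Measure.MutuallySingular.exists_isCompact_measure_compl_lt
    {X : Type*} [TopologicalSpace X] [T2Space X] [MeasurableSpace X] [OpensMeasurableSpace X]
    {μ ν : Measure X} [IsFiniteMeasure μ] [μ.InnerRegularCompactLTTop] (hμν : μ ⟂ₘ ν)
    {ε : ℝ≥0∞} (hε : ε ≠ 0) : ∃ K, IsCompact K ∧ ν K = 0 ∧ μ Kᶜ < ε := by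
  obtain ⟨s, hs, hμs, hνs⟩ := hμν
  obtain ⟨K, hKs, hK, hlt⟩ := hs.compl.exists_isCompact_lt_add (measure_ne_top μ _) hε
  refine ⟨K, hK, measure_mono_null hKs hνs, ?_⟩
  have hKc : Kᶜ ⊆ s ∪ sᶜ \ K := fun x hx => by by_cases hxs : x ∈ s <;> simp_all
  calc μ Kᶜ ≤ μ s + μ (sᶜ \ K) := (measure_mono hKc).trans (measure_union_le _ _)
    _ < ε := by
      rw [hμs, zero_add]
      exact measure_sdiff_lt_of_lt_add hK.isClosed.measurableSet.nullMeasurableSet hKs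
        (measure_ne_top μ _) hlt

theorem MeasureTheory.Integrable.exists_bcf_eqOn_one_integral_mul_abs_le
    {X : Type*} [TopologicalSpace X] [NormalSpace X] [MeasurableSpace X] [OpensMeasurableSpace X]
    {ν : Measure X} [ν.OuterRegular] {h : X → ℝ} (hh : Integrable h ν) {K : Set X}
    (hK : IsClosed K) (hνK : ν K = 0) {η : ℝ} (hη : 0 < η) :
    ∃ χ : X →ᵇ ℝ, EqOn χ 1 K ∧ (∀ x, χ x ∈ Icc 0 1) ∧ ∫ x, χ x * |h x| ∂ν ≤ η := by
  obtain ⟨δ, hδ, hsmall⟩ := exists_pos_setLIntegral_lt_of_measure_lt hh.2.ne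
    (ENNReal.ofReal_pos.2 hη).ne'
  obtain ⟨U, hKU, hU, hνU⟩ := K.exists_isOpen_lt_of_lt δ (hνK ▸ hδ)
  obtain ⟨χ, hχU, hχK, hχ01⟩ := exists_bounded_zero_one_of_closed hU.isClosed_compl hK
    (disjoint_compl_left_iff_subset.2 hKU)
  refine ⟨χ, hχK, hχ01, ?_⟩
  have hle : ∀ x, χ x * |h x| ≤ U.indicator (fun x => |h x|) x := by
    intro x
    by_cases hx : x ∈ U
    · simpa [indicator_of_mem hx] using
        mul_le_of_le_one_left (abs_nonneg (h x)) (hχ01 x).2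
    · simp [indicator_of_notMem hx, hχU hx]
  calc ∫ x, χ x * |h x| ∂ν ≤ ∫ x in U, |h x| ∂ν := by
        rw [← integral_indicator hU.measurableSet]
        exact integral_mono_of_nonneg
          (Eventually.of_forall fun x => mul_nonneg (hχ01 x).1 (abs_nonneg _))
          (hh.abs.indicator hU.measurableSet) (Eventually.of_forall hle)
    _ = (∫⁻ x in U, ‖h x‖ₑ ∂ν).toReal := integral_norm_eq_lintegral_enorm hh.1.restrict
    _ ≤ η := ENNReal.toReal_le_of_le_ofReal hη.le (hsmall U hνU).le

section SingularSeparation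

variable {X : Type*} [TopologicalSpace X] [NormalSpace X] [T2Space X] [MeasurableSpace X]
  [OpensMeasurableSpace X] {μ ν : Measure X} [IsFiniteMeasure μ] [μ.InnerRegularCompactLTTop]
  [ν.OuterRegular] {h : X → ℝ}

theorem MeasureTheory.Measure.MutuallySingular.exists_bcf_integral_le (hμν : μ ⟂ₘ ν)
    (hh : Integrable h ν) {η : ℝ} (hη : 0 < η) :
    ∃ χ : X →ᵇ ℝ, (∀ x, χ x ∈ Icc 0 1) ∧ ∫ x, 1 - χ x ∂μ ≤ η ∧ ∫ x, χ x * |h x| ∂ν ≤ η := by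
  obtain ⟨K, hK, hνK, hμK⟩ := hμν.exists_isCompact_measure_compl_lt
    (ENNReal.ofReal_pos.2 hη).ne'
  obtain ⟨χ, hχK, hχ01, hχh⟩ := hh.exists_bcf_eqOn_one_integral_mul_abs_le hK.isClosed hνK hη
  refine ⟨χ, hχ01, ?_, hχh⟩
  have hle : ∀ x, 1 - χ x ≤ Kᶜ.indicator 1 x := by
    intro x
    by_cases hx : x ∈ K
    · simp [hχK hx, hx]
    · simpa [indicator_of_mem (show x ∈ Kᶜ from hx)] using (hχ01 x).1
  calc ∫ x, 1 - χ x ∂μ ≤ ∫ x, Kᶜ.indicator 1 x ∂μ :=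
        integral_mono_of_nonneg (Eventually.of_forall fun x => sub_nonneg.2 (hχ01 x).2)
          ((integrable_const 1).indicator hK.isClosed.measurableSet.compl)
          (Eventually.of_forall hle)
    _ = μ.real Kᶜ := by
        simp [integral_indicator_one hK.isClosed.measurableSet.compl]
    _ ≤ η := ENNReal.toReal_le_of_le_ofReal hη.le hμK.le

theorem MeasureTheory.Measure.MutuallySingular.integral_bcf_mul_eq_zero (hμν : μ ⟂ₘ ν)
    (hh : Integrable h ν) {C : ℝ} (hC : ∀ f : X →ᵇ ℝ, |∫ x, f x * h x ∂ν| ≤ C * ∫ x, |f x| ∂μ)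
    (g : X →ᵇ ℝ) : ∫ x, g x * h x ∂ν = 0 := by
  set C' := max C 0
  have hint : ∀ f : X →ᵇ ℝ, Integrable (fun x => f x * h x) ν := fun f =>
    hh.bdd_mul f.continuous.aestronglyMeasurable (Eventually.of_forall f.norm_coe_le_norm)
  have hbound : ∀ η > 0, |∫ x, g x * h x ∂ν| ≤ (C' + 1) * ‖g‖ * η := by
    intro η hη
    obtain ⟨χ, hχ01, hμχ, hνχ⟩ := hμν.exists_bcf_integral_le hh hη
    have hsplit : ∫ x, g x * h x ∂ν
        = ∫ x, (g * (1 - χ)) x * h x ∂ν + ∫ x, g x * χ x * h x ∂ν := by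
      rw [← integral_add (hint _) (by simpa using hint (g * χ))]
      congr 1 with x
      simp only [BoundedContinuousFunction.coe_mul, BoundedContinuousFunction.coe_sub,
        BoundedContinuousFunction.coe_one, Pi.mul_apply, Pi.sub_apply, Pi.one_apply]
      ring
    have hfar : |∫ x, (g * (1 - χ)) x * h x ∂ν| ≤ C' * (‖g‖ * η) := by
      have hg1χ : ∫ x, |(g * (1 - χ)) x| ∂μ ≤ ‖g‖ * η := calc
        ∫ x, |(g * (1 - χ)) x| ∂μ ≤ ∫ x, ‖g‖ * (1 - χ x) ∂μ := by
          refine integral_mono_of_nonneg (Eventually.of_forall fun x => abs_nonneg _)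
            (((integrable_const 1).sub (χ.integrable μ)).const_mul _) (Eventually.of_forall ?_)
          intro x
          simpa [abs_mul, abs_of_nonneg (sub_nonneg.2 (hχ01 x).2)] using
            mul_le_mul_of_nonneg_right (g.norm_coe_le_norm x) (sub_nonneg.2 (hχ01 x).2)
        _ ≤ ‖g‖ * η := by
          rw [integral_const_mul]
          exact mul_le_mul_of_nonneg_left hμχ (norm_nonneg g)
      calc |∫ x, (g * (1 - χ)) x * h x ∂ν| ≤ C * ∫ x, |(g * (1 - χ)) x| ∂μ := hC _
        _ ≤ C' * ∫ x, |(g * (1 - χ)) x| ∂μ :=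
          mul_le_mul_of_nonneg_right (le_max_left C 0) (integral_nonneg fun x => abs_nonneg _)
        _ ≤ C' * (‖g‖ * η) := mul_le_mul_of_nonneg_left hg1χ (le_max_right C 0)
    have hnear : |∫ x, g x * χ x * h x ∂ν| ≤ ‖g‖ * η := calc
      |∫ x, g x * χ x * h x ∂ν| ≤ ∫ x, ‖g‖ * (χ x * |h x|) ∂ν := by
        refine abs_integral_le_integral_abs.trans (integral_mono_of_nonneg
          (Eventually.of_forall fun x => abs_nonneg _) ?_ (Eventually.of_forall fun x => ?_))
        · exact (hh.abs.bdd_mul χ.continuous.aestronglyMeasurable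
            (Eventually.of_forall χ.norm_coe_le_norm)).const_mul _
        · simpa [abs_mul, abs_of_nonneg (hχ01 x).1, mul_assoc] using
            mul_le_mul_of_nonneg_right (g.norm_coe_le_norm x)
              (mul_nonneg (hχ01 x).1 (abs_nonneg (h x)))
      _ ≤ ‖g‖ * η := by
        rw [integral_const_mul]
        exact mul_le_mul_of_nonneg_left hνχ (norm_nonneg g)
    calc |∫ x, g x * h x ∂ν| ≤ C' * (‖g‖ * η) + ‖g‖ * η := by
          rw [hsplit]; exact (abs_add_le _ _).trans (add_le_add hfar hnear)
      _ = (C' + 1) * ‖g‖ * η := by ring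
  have hlim : Tendsto (fun η => (C' + 1) * ‖g‖ * η) (𝓝[>] 0) (𝓝 0) := by
    simpa using ((continuous_const_mul ((C' + 1) * ‖g‖)).tendsto 0).mono_left nhdsWithin_le_nhds
  exact abs_nonpos_iff.1 (ge_of_tendsto hlim (eventually_mem_nhdsWithin.mono hbound))

end SingularSeparation

theorem MeasureTheory.Measure.MutuallySingular.ae_eq_zero_of_abs_integral_mul_le {E : Type*}
    [NormedAddCommGroup E] [NormedSpace ℝ E] [FiniteDimensional ℝ E] [MeasurableSpace E]
    [BorelSpace E] {μ ν : Measure E} [IsFiniteMeasure μ] [μ.InnerRegularCompactLTTop]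
    [ν.OuterRegular] (hμν : μ ⟂ₘ ν) {h : E → ℝ} (hh : Integrable h ν) {C : ℝ}
    (hC : ∀ f : E →ᵇ ℝ, |∫ x, f x * h x ∂ν| ≤ C * ∫ x, |f x| ∂μ) : h =ᵐ[ν] 0 :=
  ae_eq_zero_of_integral_contDiff_smul_eq_zero hh.locallyIntegrable fun g hg hgs =>
    hμν.integral_bcf_mul_eq_zero hh hC (ofCompactSupport g hg.continuous hgs)

theorem MeasureTheory.Measure.mutuallySingular_restrict_of_ae_rnDeriv_eq_zero {X : Type*}
    [MeasurableSpace X] {μ ν : Measure X} [SigmaFinite μ] [SigmaFinite ν] {s : Set X}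
    (hs : MeasurableSet s) (h : ∀ᵐ x ∂ν.restrict s, μ.rnDeriv ν x = 0) :
    μ.restrict s ⟂ₘ ν := by
  rw [← Measure.rnDeriv_eq_zero]
  filter_upwards [Measure.rnDeriv_restrict μ ν hs, (ae_restrict_iff' hs).1 h] with x hx hx'
  by_cases hxs : x ∈ s <;> simp [hx, hxs, hx']

theorem IsSpectralMeasureAt.abs_integral_mul_im_rnDeriv_le {A : H →L[ℂ] H} {u : H}
    {μ : Measure ℝ} (hμ : IsSpectralMeasureAt A u μ) (hA : IsSelfAdjoint A) {γ : ℂ → ℂ}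
    (hγ : ContinuousOn γ {z : ℂ | 0 < z.im}) {C : ℝ} (hC : ∀ z : ℂ, 0 < z.im → ‖γ z‖ ≤ C)
    {γ₀ : ℝ → ℂ}
    (hconv : ∀ᵐ t : ℝ, Tendsto (fun ε : ℝ => γ (t + ε * I)) (𝓝[>] 0) (𝓝 (γ₀ t)))
    (hann : ∀ v : H, Tendsto (fun ε : ℝ => inner ℂ
      (cfc (fun z : ℂ => γ (z.re + ε * I) - conj (γ (z.re + ε * I))) A u) v) (𝓝[>] 0) (𝓝 0))
    (f : ℝ →ᵇ ℝ) :
    |∫ t, f t * ((γ₀ t).im * (μ.rnDeriv volume t).toReal)|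
      ≤ C * ∫ t, |f t| ∂μ.singularPart volume := by
  have := hμ.1
  have hslice : ∀ ε : ℝ, 0 < ε → Continuous fun t : ℝ => γ (t + ε * I) := fun ε hε =>
    hγ.continuous_comp_ofReal_add_mul_I hε
  have hbound := abs_integral_mul_rnDeriv_le_of_tendsto (ν := volume) (l := 𝓝[>] 0)
    (q := fun (ε : ℝ) t => f t * (γ (t + ε * I)).im) (q₀ := fun t => f t * (γ₀ t).im)
    (b := fun t => C * |f t|)
    (eventually_mem_nhdsWithin.mono fun ε hε =>
      (f.continuous.mul (continuous_im.comp (hslice ε hε))).aestronglyMeasurable)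
    ((f.integrable _).abs.const_mul C)
    (eventually_mem_nhdsWithin.mono fun ε hε t => by
      rw [abs_mul, mul_comm]
      exact mul_le_mul_of_nonneg_right ((abs_im_le_norm _).trans (hC _ (by simpa using hε)))
        (abs_nonneg _))
    (hconv.mono fun t ht => ((continuous_im.tendsto _).comp ht).const_mul (f t))
    (hμ.tendsto_integral_mul_im_of_tendsto_inner hA (eventually_mem_nhdsWithin.mono hslice)
      hann f.continuous)
  simpa only [mul_assoc, integral_const_mul] using hbound

theorem singular_left_of_weak_annihilator_general
    {H : Type*} [NormedAddCommGroup H] [InnerProductSpace ℂ H] [CompleteSpace H]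
    (A : H →L[ℂ] H) (hA : IsSelfAdjoint A)
    (μ : H → Measure ℝ) (hμ : ∀ u : H, IsSpectralMeasureAt A u (μ u))
    (lam0 : ℝ) (γ : ℂ → ℂ) (γ₀ : ℝ → ℂ)
    (hγ : BddAnalyticUpper γ)
    (hconv : ∀ᵐ t : ℝ, Tendsto (fun ε : ℝ => γ ((t : ℂ) + ε * I)) (𝓝[>] 0) (𝓝 (γ₀ t)))
    (hnonreal : ∀ᵐ t ∂(volume.restrict (Iio lam0)), (γ₀ t).im ≠ 0)
    (hann : ∀ u v : H,
      Tendsto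
        (fun ε : ℝ =>
          (inner ℂ
            (cfc (fun z : ℂ =>
              γ ((z.re : ℂ) + ε * I) - conj (γ ((z.re : ℂ) + ε * I))) A u) v : ℂ))
        (𝓝[>] 0) (𝓝 0)) :
    ∀ u : H, ((μ u).restrict (Iio lam0)).MutuallySingular volume := by
  intro u
  have := (hμ u).1
  obtain ⟨hγ, C, hC⟩ := hγ
  set w := (μ u).rnDeriv volume
  have hint : Integrable (fun t => (γ₀ t).im * (w t).toReal) volume :=
    Measure.integrable_toReal_rnDeriv.bdd_mul
      (hγ.continuousOn.aestronglyMeasurable_of_tendsto_ofReal_add_mul_I hconv).im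
      ((ae_norm_le_of_tendsto_ofReal_add_mul_I hC hconv).mono fun t ht =>
        (abs_im_le_norm _).trans ht)
  have hzero : (fun t => (γ₀ t).im * (w t).toReal) =ᵐ[volume] 0 :=
    (Measure.mutuallySingular_singularPart (μ u) volume).ae_eq_zero_of_abs_integral_mul_le hint
      ((hμ u).abs_integral_mul_im_rnDeriv_le hA hγ.continuousOn hC hconv (hann u))
  refine Measure.mutuallySingular_restrict_of_ae_rnDeriv_eq_zero measurableSet_Iio ?_
  filter_upwards [ae_restrict_of_ae hzero, ae_restrict_of_ae (Measure.rnDeriv_lt_top (μ u) volume),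
    hnonreal] with t hprod hw_lt_top him
  exact ((ENNReal.toReal_eq_zero_iff _).1 ((mul_eq_zero.1 hprod).resolve_left him)).resolve_right
    hw_lt_top.ne

/-- If a bounded analytic function `γ` on `ℂ₊`, not identically zero,
has a.e. vertical boundary values that are non-real a.e. on `(−∞, lam0)`, and `γ` weakly
annihilates the bounded self-adjoint operator `A` (i.e. `⟨g_ε(A)u, v⟩ → 0` for all `u, v`,
with `g_ε(t) = γ(t+iε) − conj (γ(t+iε))`), then the spectrum of `A` to the left of `lam0`
is purely singular. -/
theorem singular_left_of_weak_annihilator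
    {H : Type*} [NormedAddCommGroup H] [InnerProductSpace ℂ H] [CompleteSpace H]
    [TopologicalSpace.SeparableSpace H]
    (A : H →L[ℂ] H) (hA : IsSelfAdjoint A)
    (μ : H → Measure ℝ) (hμ : ∀ u : H, IsSpectralMeasureAt A u (μ u))
    (lam0 : ℝ) (γ : ℂ → ℂ) (γ₀ : ℝ → ℂ)
    (hγ : BddAnalyticUpper γ)
    (hne : ∃ z : ℂ, 0 < z.im ∧ γ z ≠ 0)
    (hconv : ∀ᵐ t : ℝ, Tendsto (fun ε : ℝ => γ ((t : ℂ) + ε * I)) (𝓝[>] 0) (𝓝 (γ₀ t)))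
    (hnonreal : ∀ᵐ t ∂(volume.restrict (Iio lam0)), (γ₀ t).im ≠ 0)
    (hann : ∀ u v : H,
      Tendsto
        (fun ε : ℝ =>
          (inner ℂ
            (cfc (fun z : ℂ =>
              γ ((z.re : ℂ) + ε * I) - conj (γ ((z.re : ℂ) + ε * I))) A u) v : ℂ))
        (𝓝[>] 0) (𝓝 0)) :
    ∀ u : H, ((μ u).restrict (Iio lam0)).MutuallySingular volume :=
  singular_left_of_weak_annihilator_general A hA μ hμ lam0 γ γ₀ hγ hconv hnonreal hann
end
end

section
/- Let H be a complex Hilbert space and A a bounded self-adjoint operator on H. Let b : ℝ → ℝ be a nonnegative, continuously differentiable function such that b and b' are bounded and Lebesgue integrable, and let β(λ) = ∫_ℝ b(k)/(k−λ) dk for Im λ > 0. For ε > 0 define f_ε(t) = β(t+iε) − conj(β(t+iε)) (corresponding to β(A+iε) − β_*(A−iε) with β_*(λ) = conj(β(conj λ))). Then f_ε(A) converges strongly, as ε ↓ 0, to g(A), where g(t) = 2πi·b(t); that is, ‖f_ε(A)u − g(A)u‖ → 0 for every u ∈ H, where f_ε(A) and g(A) are given by the continuous functional calculus. -/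
/-!
For `ε > 0` the substitution `k = t + εx` turns `Im β(t + iε)` into the Poisson integral
`∫ b(t + εx) / (1 + x²) dx`, while `π b(t) = ∫ b(t) / (1 + x²) dx`. As `b` is bounded by `M` and
`L`-Lipschitz, the two differ by at most `∫ min(2M, L|εx|) / (1 + x²) dx`, uniformly in `t`, and
this tends to `0` by dominated convergence. Since `f_ε = 2i Im β(· + iε)` and `g = 2i π b` on the
real axis, `f_ε → g` uniformly, so by the continuity of the continuous functional calculus in the
function variable, `f_ε(A) → g(A)` in operator norm, in particular strongly.
-/

open MeasureTheory Complex Filter Topology Set ComplexConjugate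
open scoped ENNReal

noncomputable section

variable {H : Type*} [NormedAddCommGroup H] [InnerProductSpace ℂ H] [CompleteSpace H]

/-- The Riesz (Cauchy) transform `β(λ) = ∫ b(k)/(k − λ) dk` of a real function `b`. -/
def cauchyTransform (b : ℝ → ℝ) (lam : ℂ) : ℂ :=
  ∫ k : ℝ, (b k : ℂ) / ((k : ℂ) - lam)

open Real
open scoped NNReal

lemma abs_im_le_norm_ofReal_sub (k : ℝ) (z : ℂ) : |z.im| ≤ ‖(k : ℂ) - z‖ := by
  simpa using Complex.abs_im_le_norm ((k : ℂ) - z)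

lemma norm_ofReal_div_ofReal_sub_le (c k : ℝ) {z : ℂ} (hz : 0 < z.im) :
    ‖(c : ℂ) / ((k : ℂ) - z)‖ ≤ |c| / z.im := by
  rw [norm_div, Complex.norm_real, Real.norm_eq_abs]
  gcongr
  simpa [abs_of_pos hz] using abs_im_le_norm_ofReal_sub k z

lemma ofReal_sub_ne_zero {k : ℝ} {z : ℂ} (hz : 0 < z.im) : (k : ℂ) - z ≠ 0 := fun h => by
  simpa [hz.ne'] using congrArg Complex.im h

lemma integrable_cauchyTransform_integrand {b : ℝ → ℝ} (hb : Integrable b) {z : ℂ}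
    (hz : 0 < z.im) : Integrable fun k : ℝ => (b k : ℂ) / ((k : ℂ) - z) := by
  refine (hb.abs.div_const z.im).mono' ?_ (.of_forall fun k => norm_ofReal_div_ofReal_sub_le _ _ hz)
  exact hb.ofReal.aestronglyMeasurable.div₀
    (by fun_prop : Continuous fun k : ℝ => (k : ℂ) - z).aestronglyMeasurable

lemma continuousOn_cauchyTransform {b : ℝ → ℝ} (hb : Integrable b) :
    ContinuousOn (cauchyTransform b) {z : ℂ | 0 < z.im} := by
  intro z (hz : 0 < z.im)
  have hnear : ∀ᶠ w in 𝓝 z, z.im / 2 < w.im :=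
    Complex.continuous_im.continuousAt.eventually (lt_mem_nhds (half_lt_self hz))
  refine (continuousAt_of_dominated (bound := fun k => |b k| / (z.im / 2)) ?_ ?_
    (hb.abs.div_const _) (.of_forall fun k => ?_)).continuousWithinAt
  · filter_upwards [hnear] with w hw
    exact (integrable_cauchyTransform_integrand hb (by linarith)).aestronglyMeasurable
  · filter_upwards [hnear] with w hw
    refine .of_forall fun k => (norm_ofReal_div_ofReal_sub_le _ _ (by linarith)).trans ?_
    gcongr
  · exact continuousAt_const.div (by fun_prop) (ofReal_sub_ne_zero hz)

lemma integral_comp_add_mul_left {E : Type*} [NormedAddCommGroup E] [NormedSpace ℝ E]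
    (g : ℝ → E) (t a : ℝ) : ∫ x, g (t + a * x) = |a⁻¹| • ∫ k, g k := by
  rw [Measure.integral_comp_mul_left (fun y => g (t + y)) a, integral_add_left_eq_self]

lemma im_ofReal_div_ofReal_sub_add_mul_I (c k t ε : ℝ) :
    ((c : ℂ) / ((k : ℂ) - (t + ε * I))).im = c * ε / ((k - t) ^ 2 + ε ^ 2) := by
  simp only [div_im, ofReal_im, sub_re, ofReal_re, add_re, mul_re, I_re, mul_zero, I_im, mul_one,
    sub_self, add_zero, zero_mul, normSq_apply, sub_im, add_im, mul_im, zero_add, zero_sub, mul_neg,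
    neg_mul, neg_neg, zero_div]
  ring

lemma im_cauchyTransform_add_mul_I {b : ℝ → ℝ} (hb : Integrable b) {ε : ℝ} (hε : 0 < ε)
    (t : ℝ) : (cauchyTransform b (t + ε * I)).im = ∫ x, b (t + ε * x) / (1 + x ^ 2) := by
  have hint := integrable_cauchyTransform_integrand hb (z := t + ε * I) (by simpa using hε)
  have hsubst := integral_comp_add_mul_left (fun k => b k * ε / ((k - t) ^ 2 + ε ^ 2)) t ε
  rw [abs_inv, abs_of_pos hε, smul_eq_mul] at hsubst
  rw [cauchyTransform, ← RCLike.im_eq_complex_im, ← integral_im hint]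
  simp only [RCLike.im_eq_complex_im, im_ofReal_div_ofReal_sub_add_mul_I]
  rw [← inv_mul_eq_iff_eq_mul₀ (inv_ne_zero hε.ne'), inv_inv] at hsubst
  rw [← hsubst, ← integral_const_mul]
  congr 1 with x
  field_simp
  ring

lemma integrable_div_one_add_sq {g : ℝ → ℝ} (hg : AEStronglyMeasurable g) {C : ℝ}
    (hC : ∀ x, |g x| ≤ C) : Integrable fun x => g x / (1 + x ^ 2) := by
  simpa only [div_eq_mul_inv] using integrable_inv_one_add_sq.bdd_mul hg (.of_forall hC)

lemma abs_min_mul_abs_le {C : ℝ} (hC : 0 ≤ C) (L : ℝ≥0) (y : ℝ) : |min C (L * |y|)| ≤ C := by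
  rw [abs_of_nonneg (le_min hC (by positivity))]
  exact min_le_left _ _

lemma abs_integral_comp_add_mul_div_one_add_sq_sub_le {b : ℝ → ℝ} {M : ℝ} {L : ℝ≥0}
    (hM : ∀ t, |b t| ≤ M) (hb : LipschitzWith L b) (ε t : ℝ) :
    |(∫ x, b (t + ε * x) / (1 + x ^ 2)) - π * b t| ≤
      ∫ x, min (2 * M) (L * |ε * x|) / (1 + x ^ 2) := by
  have hM0 : 0 ≤ M := (abs_nonneg _).trans (hM 0)
  have hcont := hb.continuous
  have hπ : π * b t = ∫ x, b t / (1 + x ^ 2) := by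
    simp_rw [div_eq_mul_inv]
    rw [integral_const_mul, integral_univ_inv_one_add_sq, mul_comm]
  have hshift : Integrable fun x => b (t + ε * x) / (1 + x ^ 2) :=
    integrable_div_one_add_sq (by fun_prop : Continuous _).aestronglyMeasurable fun x => hM _
  have hconst : Integrable fun x : ℝ => b t / (1 + x ^ 2) :=
    integrable_div_one_add_sq aestronglyMeasurable_const fun _ => hM t
  rw [hπ, ← integral_sub hshift hconst, ← Real.norm_eq_abs]
  refine norm_integral_le_of_norm_le
    (integrable_div_one_add_sq (by fun_prop) fun x => abs_min_mul_abs_le (by positivity) L (ε * x))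
    (.of_forall fun x => ?_)
  rw [← sub_div, Real.norm_eq_abs, abs_div, abs_of_pos (by positivity : (0 : ℝ) < 1 + x ^ 2)]
  gcongr
  refine le_min ?_ ?_
  · linarith [abs_sub (b (t + ε * x)) (b t), hM (t + ε * x), hM t]
  · simpa [Real.dist_eq] using hb.dist_le_mul (t + ε * x) t

lemma tendsto_integral_min_mul_abs_div_one_add_sq {C : ℝ} (hC : 0 ≤ C) (L : ℝ≥0) :
    Tendsto (fun ε : ℝ => ∫ x, min C (L * |ε * x|) / (1 + x ^ 2)) (𝓝 0) (𝓝 0) := by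
  have hcont : Continuous fun ε : ℝ => ∫ x, min C (L * |ε * x|) / (1 + x ^ 2) :=
    continuous_of_dominated
      (fun ε => ((by fun_prop : Continuous _).div (by fun_prop) fun x => by positivity :
        Continuous fun x : ℝ => min C (L * |ε * x|) / (1 + x ^ 2)).aestronglyMeasurable)
      (fun ε => .of_forall fun x => by
        rw [Real.norm_eq_abs, abs_div, abs_of_pos (by positivity : (0 : ℝ) < 1 + x ^ 2)]
        gcongr
        exact abs_min_mul_abs_le hC L _)
      (integrable_div_one_add_sq aestronglyMeasurable_const fun _ => le_of_eq (abs_of_nonneg hC))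
      (.of_forall fun x => by fun_prop)
  simpa [min_eq_right hC] using hcont.tendsto 0

lemma tendstoUniformly_im_cauchyTransform {b : ℝ → ℝ} {M : ℝ} {L : ℝ≥0}
    (hM : ∀ t, |b t| ≤ M) (hb : LipschitzWith L b) (hint : Integrable b) :
    TendstoUniformly (fun (ε t : ℝ) => (cauchyTransform b (t + ε * I)).im) (fun t => π * b t)
      (𝓝[>] 0) := by
  have hM0 : 0 ≤ M := (abs_nonneg _).trans (hM 0)
  rw [Metric.tendstoUniformly_iff]
  intro δ hδ
  filter_upwards [(tendsto_integral_min_mul_abs_div_one_add_sq (by positivity : 0 ≤ 2 * M) L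
    |>.mono_left nhdsWithin_le_nhds) (Iio_mem_nhds hδ), self_mem_nhdsWithin] with ε hφ hε t
  rw [dist_comm, Real.dist_eq, im_cauchyTransform_add_mul_I hint hε]
  exact (abs_integral_comp_add_mul_div_one_add_sq_sub_le hM hb ε t).trans_lt hφ

theorem cauchyTransform_jump_strong_convergence_general
    {H : Type*} [NormedAddCommGroup H] [InnerProductSpace ℂ H] [CompleteSpace H]
    (A : H →L[ℂ] H)
    (b : ℝ → ℝ) (hbC1 : ContDiff ℝ 1 b)
    (hbbdd : ∃ C : ℝ, ∀ t : ℝ, |b t| ≤ C) (hbint : Integrable b)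
    (hb'bdd : ∃ C : ℝ, ∀ t : ℝ, |deriv b t| ≤ C) :
    ∀ u : H,
      Tendsto
        (fun ε : ℝ =>
          ‖cfc (fun z : ℂ =>
              cauchyTransform b ((z.re : ℂ) + ε * I) -
                conj (cauchyTransform b ((z.re : ℂ) + ε * I))) A u -
            cfc (fun z : ℂ => (2 * (Real.pi : ℂ) * I) * ((b z.re : ℝ) : ℂ)) A u‖)
        (𝓝[>] 0) (𝓝 0) := by
  intro u
  obtain ⟨M, hM⟩ := hbbdd
  obtain ⟨L, hL⟩ := hb'bdd
  have hlip : LipschitzWith L.toNNReal b :=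
    lipschitzWith_of_nnnorm_deriv_le (hbC1.differentiable one_ne_zero) fun t => by
      simpa [← NNReal.coe_le_coe] using (hL t).trans (le_max_left L 0)
  have hunif : TendstoUniformly
      (fun (ε : ℝ) (z : ℂ) => cauchyTransform b ((z.re : ℂ) + ε * I) -
        conj (cauchyTransform b ((z.re : ℂ) + ε * I)))
      (fun z : ℂ => (2 * (Real.pi : ℂ) * I) * ((b z.re : ℝ) : ℂ)) (𝓝[>] 0) := by
    convert ((2 * I) • Complex.ofRealCLM).uniformContinuous.comp_tendstoUniformly
      ((tendstoUniformly_im_cauchyTransform hM hlip hbint).comp Complex.re) using 2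
    · funext z
      simp only [sub_conj, ofReal_mul, ofReal_ofNat, FunLike.coe_smul, Function.comp_apply,
        Pi.smul_apply, ofRealCLM_apply, smul_eq_mul]
      ring
    · simp only [FunLike.coe_smul, Function.comp_apply, Pi.smul_apply, ofRealCLM_apply, ofReal_mul,
        smul_eq_mul]
      ring
  have hcont : ∀ ε > (0 : ℝ), Continuous fun z : ℂ => cauchyTransform b ((z.re : ℂ) + ε * I) :=
    fun ε hε => (continuousOn_cauchyTransform hbint).comp_continuous (by fun_prop)
      fun z => by simpa using hε
  have hcfc := tendsto_cfc_fun (a := A) hunif.tendstoUniformlyOn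
    (eventually_mem_nhdsWithin.mono fun ε hε =>
      ((hcont ε hε).sub (Complex.continuous_conj.comp (hcont ε hε))).continuousOn)
  exact tendsto_iff_norm_sub_tendsto_zero.1
    (((ContinuousLinearMap.apply ℂ H u).continuous.tendsto _).comp hcfc)

/-- Let `A` be a bounded self-adjoint operator, `b : ℝ → ℝ` nonnegative,
`C¹`, with `b` and `b'` bounded and integrable, and `β(λ) = ∫ b(k)/(k−λ) dk`. Then
`β(A+iε) − β_*(A−iε) = f_ε(A)` with `f_ε(t) = β(t+iε) − conj(β(t+iε))` converges
strongly, as `ε ↓ 0`, to `g(A)` where `g(t) = 2πi·b(t)`. -/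
theorem cauchyTransform_jump_strong_convergence
    {H : Type*} [NormedAddCommGroup H] [InnerProductSpace ℂ H] [CompleteSpace H]
    (A : H →L[ℂ] H) (hA : IsSelfAdjoint A)
    (b : ℝ → ℝ) (hb0 : ∀ t : ℝ, 0 ≤ b t) (hbC1 : ContDiff ℝ 1 b)
    (hbbdd : ∃ C : ℝ, ∀ t : ℝ, |b t| ≤ C) (hbint : Integrable b)
    (hb'bdd : ∃ C : ℝ, ∀ t : ℝ, |deriv b t| ≤ C) (hb'int : Integrable (deriv b)) :
    ∀ u : H,
      Tendsto
        (fun ε : ℝ =>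
          ‖cfc (fun z : ℂ =>
              cauchyTransform b ((z.re : ℂ) + ε * I) -
                conj (cauchyTransform b ((z.re : ℂ) + ε * I))) A u -
            cfc (fun z : ℂ => (2 * (Real.pi : ℂ) * I) * ((b z.re : ℝ) : ℂ)) A u‖)
        (𝓝[>] 0) (𝓝 0) :=
  cauchyTransform_jump_strong_convergence_general A b hbC1 hbbdd hbint hb'bdd
end
end
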